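/- arXiv:0806.4801 — 9 statements merged into one kernel-verified Lean document; each statement's English description precedes it below -/
import Mathlib

section
/- An automorphism g of the rooted binary tree acts transitively on every level if and only if for each n ≥ 0, the number of vertices v at level n such that the section g|_v acts nontrivially on the first level is odd. -/
/-- An automorphism of the rooted binary tree `{0,1}*` (words = `List Bool`):
a bijection preserving length and the prefix relation. -/
def IsTreeAut (f : List Bool → List Bool) : Prop :=
  Function.Bijective f ∧ (∀ w, (f w).length = w.length) ∧
    ∀ u v : List Bool, u <+: v → f u <+: f v

/-- The section of `f` at the vertex `v`. -/
def sect (f : List Bool → List Bool) (v : List Bool) : List Bool → List Bool :=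
  fun w => (f (v ++ w)).drop v.length

/-- The section of `f` at `v` acts nontrivially on the first level. -/
def IsSwitch (f : List Bool → List Bool) (v : List Bool) : Prop :=
  sect f v [false] ≠ [false]

namespace TreeAutAux

/-- The switch bit of `f` at `v`. -/
def sbit (f : List Bool → List Bool) (v : List Bool) : Bool :=
  decide (sect f v [false] ≠ [false])

lemma sbit_eq_true_iff (f : List Bool → List Bool) (v : List Bool) :
    sbit f v = true ↔ IsSwitch f v := by
  simp [sbit, IsSwitch]

/-- Cumulative switch bit along the orbit. -/
def S (f : List Bool → List Bool) : ℕ → List Bool → Bool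
  | 0, _ => false
  | k + 1, v => xor (sbit f v) (S f k (f v))

section

variable {f : List Bool → List Bool} (hf : IsTreeAut f)
include hf

lemma len (w : List Bool) : (f w).length = w.length := hf.2.1 w

lemma step (v : List Bool) (b : Bool) :
    f (v ++ [b]) = f v ++ [xor b (sbit f v)] := by
  have key : ∀ c : Bool, ∃ d : Bool, f (v ++ [c]) = f v ++ [d] := by
    intro c
    obtain ⟨t, ht⟩ := hf.2.2 v (v ++ [c]) ⟨[c], rfl⟩
    have hlen : t.length = 1 := by
      have h1 := len hf (v ++ [c])
      have h2 := len hf v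
      have := congrArg List.length ht
      simp at this h1
      omega
    obtain ⟨d, rfl⟩ : ∃ d, t = [d] := by
      match t, hlen with
      | [d], _ => exact ⟨d, rfl⟩
    exact ⟨d, ht.symm⟩
  obtain ⟨d0, hd0⟩ := key false
  obtain ⟨d1, hd1⟩ := key true
  have hs : sbit f v = d0 := by
    have : sect f v [false] = [d0] := by
      simp only [sect, hd0]
      rw [← len hf v, List.drop_left]
    cases d0 <;> simp [sbit, this]
  have hne : d0 ≠ d1 := by
    intro h
    subst h
    have : v ++ [false] = v ++ [true] := hf.1.1 (by rw [hd0, hd1])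
    simp at this
  cases b
  · rw [hd0, hs]; simp
  · rw [hd1, hs]
    cases d0 <;> cases d1 <;> simp_all

lemma iter_step (k : ℕ) (v : List Bool) (b : Bool) :
    f^[k] (v ++ [b]) = f^[k] v ++ [xor b (S f k v)] := by
  induction k generalizing v b with
  | zero => simp [S]
  | succ k ih =>
    rw [Function.iterate_succ_apply, Function.iterate_succ_apply, step hf, ih]
    simp [S, Bool.xor_assoc]

omit hf in
lemma S_succ' (k : ℕ) (v : List Bool) :
    S f (k + 1) v = xor (S f k v) (sbit f (f^[k] v)) := by
  induction k generalizing v with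
  | zero => simp [S]
  | succ k ih =>
    show xor (sbit f v) (S f (k + 1) (f v)) = _
    rw [ih (f v)]
    simp [S, Bool.xor_assoc, Function.iterate_succ_apply]

omit hf in
lemma S_parity (k : ℕ) (v : List Bool) :
    S f k v = true ↔
      Odd ((Finset.range k).filter (fun j => sbit f (f^[j] v) = true)).card := by
  induction k with
  | zero => simp [S]
  | succ k ih =>
    rw [S_succ' , Finset.range_add_one, Finset.filter_insert]
    by_cases hk : sbit f (f^[k] v) = true
    · rw [if_pos hk, Finset.card_insert_of_notMem (by simp), hk]
      rw [Nat.odd_add_one]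
      cases h : S f k v <;> simp_all
    · rw [if_neg hk]
      simp only [Bool.not_eq_true] at hk
      rw [hk]
      simpa using ih

omit hf in
lemma S_add (a b : ℕ) (v : List Bool) :
    S f (a + b) v = xor (S f a v) (S f b (f^[a] v)) := by
  induction b with
  | zero => simp [S]
  | succ b ih =>
    have h1 : a + (b + 1) = (a + b) + 1 := by omega
    rw [h1, S_succ', ih, S_succ']
    have h2 : f^[a + b] v = f^[b] (f^[a] v) := by
      rw [← Function.iterate_add_apply, Nat.add_comm]
    rw [h2, Bool.xor_assoc]

omit hf in
lemma S_mul_period (m q : ℕ) (v : List Bool) (hper : f^[m] v = v)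
    (hSm : S f m v = false) : S f (q * m) v = false := by
  induction q with
  | zero => simp [S]
  | succ q ih =>
    have h1 : (q + 1) * m = m + q * m := by ring
    rw [h1, S_add, hper, hSm, ih]
    rfl

lemma iter_len (k : ℕ) (w : List Bool) : (f^[k] w).length = w.length := by
  induction k generalizing w with
  | zero => rfl
  | succ k ih => rw [Function.iterate_succ_apply, ih, len hf]

/-- The permutation induced by `f` on level `n`. -/
def glev (hf : IsTreeAut f) (n : ℕ) (w : Fin n → Bool) : Fin n → Bool :=
  fun i => (f (List.ofFn w))[i.1]'(by rw [len hf, List.length_ofFn]; exact i.2)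

lemma ofFn_glev (n : ℕ) (w : Fin n → Bool) :
    List.ofFn (glev hf n w) = f (List.ofFn w) := by
  apply List.ext_getElem
  · rw [List.length_ofFn, len hf, List.length_ofFn]
  · intro i h1 h2
    simp [glev]

lemma ofFn_glev_iter (n : ℕ) (k : ℕ) (w : Fin n → Bool) :
    f^[k] (List.ofFn w) = List.ofFn ((glev hf n)^[k] w) := by
  induction k generalizing w with
  | zero => rfl
  | succ k ih =>
    rw [Function.iterate_succ_apply, Function.iterate_succ_apply, ← ofFn_glev hf, ih]

omit hf in
lemma ofFn_surj (n : ℕ) (l : List Bool) (h : l.length = n) :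
    ∃ w : Fin n → Bool, List.ofFn w = l := by
  refine ⟨fun i => l[i.1]'(by omega), ?_⟩
  apply List.ext_getElem
  · simp [h]
  · intro i h1 h2
    simp

/-- Transitivity on level `n`, list version. -/
def Trans (f : List Bool → List Bool) (n : ℕ) : Prop :=
  ∀ u v : List Bool, u.length = n → v.length = n → ∃ k, f^[k] u = v

/-- Number of switches on level `n`. -/
def N (f : List Bool → List Bool) (n : ℕ) : ℕ :=
  (Finset.univ.filter (fun v : Fin n → Bool => sbit f (List.ofFn v) = true)).card

lemma orbit_facts (n : ℕ) (htr : Trans f n) (w : Fin n → Bool) :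
    0 < Function.minimalPeriod (glev hf n) w ∧
    f^[Function.minimalPeriod (glev hf n) w] (List.ofFn w) = List.ofFn w ∧
    (S f (Function.minimalPeriod (glev hf n) w) (List.ofFn w) = true ↔ Odd (N f n)) := by
  set g := glev hf n with hg
  set m := Function.minimalPeriod g w with hmdef
  have hper : w ∈ Function.periodicPts g := by
    obtain ⟨k, hk⟩ := htr (f (List.ofFn w)) (List.ofFn w)
      (by rw [len hf, List.length_ofFn]) (by rw [List.length_ofFn])
    refine ⟨k + 1, Nat.succ_pos k, ?_⟩
    have : f^[k + 1] (List.ofFn w) = List.ofFn w := by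
      rw [Function.iterate_succ_apply]; exact hk
    rw [ofFn_glev_iter hf] at this
    exact List.ofFn_injective this
  have hm0 : 0 < m := Function.minimalPeriod_pos_of_mem_periodicPts hper
  have hgm : g^[m] w = w := Function.iterate_minimalPeriod
  have hfm : f^[m] (List.ofFn w) = List.ofFn w := by
    rw [ofFn_glev_iter hf, hgm]
  have hsurj : ∀ v : Fin n → Bool, ∃ j < m, g^[j] w = v := by
    intro v
    obtain ⟨k, hk⟩ := htr (List.ofFn w) (List.ofFn v)
      (by rw [List.length_ofFn]) (by rw [List.length_ofFn])
    rw [ofFn_glev_iter hf] at hk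
    refine ⟨k % m, Nat.mod_lt _ hm0, ?_⟩
    rw [Function.iterate_mod_minimalPeriod_eq]
    exact List.ofFn_injective hk
  have hinj := Function.iterate_injOn_Iio_minimalPeriod (f := g) (x := w)
  have hcard : ((Finset.range m).filter
      (fun j => sbit f (f^[j] (List.ofFn w)) = true)).card = N f n := by
    apply Finset.card_bij (fun j _ => g^[j] w)
    · intro j hj
      simp only [Finset.mem_filter, Finset.mem_range] at hj
      simp only [N, Finset.mem_filter, Finset.mem_univ, true_and]
      rw [← ofFn_glev_iter hf]
      exact hj.2
    · intro j1 hj1 j2 hj2 hj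
      simp only [Finset.mem_filter, Finset.mem_range] at hj1 hj2
      exact hinj hj1.1 hj2.1 hj
    · intro v hv
      simp only [N, Finset.mem_filter, Finset.mem_univ, true_and] at hv
      obtain ⟨j, hj, hjv⟩ := hsurj v
      refine ⟨j, ?_, hjv⟩
      simp only [Finset.mem_filter, Finset.mem_range]
      refine ⟨hj, ?_⟩
      rw [ofFn_glev_iter hf, hjv]
      exact hv
  exact ⟨hm0, hfm, by rw [S_parity, hcard]⟩

lemma main_step (n : ℕ) : Trans f (n + 1) ↔ (Trans f n ∧ Odd (N f n)) := by
  constructor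
  · intro htr
    have htn : Trans f n := by
      intro u v hu hv
      obtain ⟨k, hk⟩ := htr (u ++ [false]) (v ++ [false]) (by simp [hu]) (by simp [hv])
      rw [iter_step hf] at hk
      refine ⟨k, ?_⟩
      exact (List.append_inj hk (by rw [iter_len hf, hu, hv])).1
    refine ⟨htn, ?_⟩
    by_contra hodd
    set w : Fin n → Bool := fun _ => false with hw
    set v' : List Bool := List.ofFn w with hv'
    obtain ⟨hm0, hfm, hSm⟩ := orbit_facts hf n htn w
    set m := Function.minimalPeriod (glev hf n) w with hmdef
    have hSfalse : S f m v' = false := by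
      cases h : S f m v' with
      | false => rfl
      | true => exact absurd (hSm.mp h) hodd
    obtain ⟨k, hk⟩ := htr (v' ++ [false]) (v' ++ [true])
      (by simp [hv']) (by simp [hv'])
    rw [iter_step hf] at hk
    have hlen : (f^[k] v').length = v'.length := iter_len hf k v'
    obtain ⟨h1, h2⟩ := List.append_inj hk hlen
    have h3 : S f k v' = true := by
      have := List.head_eq_of_cons_eq h2
      simpa using this
    have hdvd : m ∣ k := by
      apply Function.IsPeriodicPt.minimalPeriod_dvd
      show (glev hf n)^[k] w = w
      apply List.ofFn_injective
      rw [← ofFn_glev_iter hf]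
      exact h1
    obtain ⟨q, rfl⟩ := hdvd
    rw [Nat.mul_comm] at h3
    rw [S_mul_period m q v' hfm hSfalse] at h3
    exact Bool.false_ne_true h3
  · rintro ⟨htn, hodd⟩
    intro u v hu hv
    have hune : u ≠ [] := by intro h; simp [h] at hu
    have hvne : v ≠ [] := by intro h; simp [h] at hv
    obtain ⟨u', a, rfl⟩ : ∃ u' a, u = u' ++ [a] :=
      ⟨u.dropLast, u.getLast hune, (List.dropLast_append_getLast hune).symm⟩
    obtain ⟨v', b, rfl⟩ : ∃ v' b, v = v' ++ [b] :=
      ⟨v.dropLast, v.getLast hvne, (List.dropLast_append_getLast hvne).symm⟩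
    have hu' : u'.length = n := by simpa using hu
    have hv' : v'.length = n := by simpa using hv
    obtain ⟨k, hk⟩ := htn u' v' hu' hv'
    obtain ⟨w, hw⟩ := ofFn_surj n v' hv'
    obtain ⟨hm0, hfm, hSm⟩ := orbit_facts hf n htn w
    rw [hw] at hfm hSm
    set m := Function.minimalPeriod (glev hf n) w with hmdef
    by_cases hcb : xor a (S f k u') = b
    · exact ⟨k, by rw [iter_step hf, hk, hcb]⟩
    · refine ⟨m + k, ?_⟩
      rw [Function.iterate_add_apply, iter_step hf, hk, iter_step hf, hfm,
        hSm.mpr hodd]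
      have hxx : xor (xor a (S f k u')) true = b := by
        cases hx : xor a (S f k u') <;> cases b <;> simp_all
      rw [hxx]

end

lemma card_eq (f : List Bool → List Bool) (n : ℕ) :
    Nat.card {v : Fin n → Bool // IsSwitch f (List.ofFn v)} = N f n := by
  have he : ∀ v : Fin n → Bool, IsSwitch f (List.ofFn v) ↔ sbit f (List.ofFn v) = true :=
    fun v => (sbit_eq_true_iff f _).symm
  rw [Nat.card_congr (Equiv.subtypeEquivRight he), Nat.card_eq_fintype_card,
    Fintype.card_subtype]
  rfl

end TreeAutAux

/-- An automorphism g of the rooted binary tree acts transitively on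
every level if and only if for each n ≥ 0 the number of vertices v at level n
such that the section g|_v acts nontrivially on the first level is odd. -/
theorem level_transitive_iff_odd_switches (f : List Bool → List Bool) (hf : IsTreeAut f) :
    (∀ (n : ℕ) (u v : Fin n → Bool), ∃ k : ℕ, f^[k] (List.ofFn u) = List.ofFn v) ↔
      (∀ n : ℕ, Odd (Nat.card {v : Fin n → Bool // IsSwitch f (List.ofFn v)})) := by
  open TreeAutAux in
  have hTrans : (∀ (n : ℕ) (u v : Fin n → Bool), ∃ k : ℕ, f^[k] (List.ofFn u) = List.ofFn v)
      ↔ ∀ n, TreeAutAux.Trans f n := by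
    constructor
    · intro h n u v hu hv
      obtain ⟨wu, hwu⟩ := TreeAutAux.ofFn_surj n u hu
      obtain ⟨wv, hwv⟩ := TreeAutAux.ofFn_surj n v hv
      obtain ⟨k, hk⟩ := h n wu wv
      exact ⟨k, by rw [hwu, hwv] at hk; exact hk⟩
    · intro h n u v
      exact h n (List.ofFn u) (List.ofFn v) (by simp) (by simp)
  rw [hTrans]
  have hcard : ∀ n, Odd (Nat.card {v : Fin n → Bool // IsSwitch f (List.ofFn v)})
      ↔ Odd (TreeAutAux.N f n) := fun n => by rw [TreeAutAux.card_eq]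
  constructor
  · intro h n
    rw [hcard]
    exact ((TreeAutAux.main_step hf n).mp (h (n + 1))).2
  · intro h n
    induction n with
    | zero =>
      intro u v hu hv
      rw [List.length_eq_zero_iff] at hu hv
      exact ⟨0, by rw [hu, hv]; rfl⟩
    | succ n ih =>
      exact (TreeAutAux.main_step hf n).mpr ⟨ih, (hcard n).mp (h n)⟩
end

section
/- The group G generated by the automaton B₄ (with generators a=(c,b), b=(b,c), c=(d,d)σ, d=(a,a)σ) is infinite. -/
/-- The action of a state of a Mealy automaton on finite words. -/
def mealy {Q X : Type*} (tr : Q → X → Q) (o : Q → X → X) : Q → List X → List X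
  | _, [] => []
  | q, x :: w => o q x :: mealy tr o (tr q x) w

theorem mealy_bij {Q X : Type*} (tr : Q → X → Q) (o : Q → X → X)
    (h : ∀ q, Function.Bijective (o q)) (q : Q) : Function.Bijective (mealy tr o q) := by
  classical
  have L : ∀ (w : List X) (q : Q),
      mealy (fun q x => tr q (Function.surjInv (h q).surjective x))
        (fun q x => Function.surjInv (h q).surjective x) q (mealy tr o q w) = w := by
    intro w
    induction w with
    | nil => intro q; rfl
    | cons x w ih =>
      intro q
      have hx : Function.surjInv (h q).surjective (o q x) = x :=
        Function.leftInverse_surjInv (h q) x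
      simp [mealy, hx, ih]
  have R : ∀ (w : List X) (q : Q),
      mealy tr o q
        (mealy (fun q x => tr q (Function.surjInv (h q).surjective x))
          (fun q x => Function.surjInv (h q).surjective x) q w) = w := by
    intro w
    induction w with
    | nil => intro q; rfl
    | cons x w ih =>
      intro q
      have hx : o q (Function.surjInv (h q).surjective x) = x :=
        Function.rightInverse_surjInv (h q).surjective x
      simp [mealy, hx, ih]
  exact ⟨Function.LeftInverse.injective (fun w => L w q),
    Function.RightInverse.surjective (fun w => R w q)⟩

/-- Transition function of the Bellaterra automaton B4 (states a,b,c,d = 0,1,2,3). -/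
def tr4 : Fin 4 → Bool → Fin 4 := fun q x => if x then ![1, 2, 3, 0] q else ![2, 1, 3, 0] q

/-- Output function of B4: a,b act trivially, c,d flip. -/
def out4 : Fin 4 → Bool → Bool := fun q => if q.val ≤ 1 then id else Bool.not

def act (q : Fin 4) : List Bool → List Bool := mealy tr4 out4 q

noncomputable def actE (q : Fin 4) : Equiv.Perm (List Bool) :=
  Equiv.ofBijective _ (mealy_bij tr4 out4 (by decide) q)

/-- The states of the dual automaton of B4. -/
def dAct (x : Bool) : List (Fin 4) → List (Fin 4) :=
  mealy (fun x q => out4 q x) (fun x q => tr4 q x) x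

noncomputable def dActE (x : Bool) : Equiv.Perm (List (Fin 4)) :=
  Equiv.ofBijective _ (mealy_bij (fun x q => out4 q x) (fun x q => tr4 q x) (by decide) x)


/-!
The element `d * a` already has infinite order. Call a word in the states *odometer-like* if it
contains an odd number of the letters `a, b` and has even length. Such a word flips the first
letter, so its square fixes `0` and restricts below it to the product of the sections, a word of
twice the length in which the `a, b` count keeps its parity (each of `a, b` has exactly one section
in `{a, b}`, each of `c, d` has zero or two). Hence the word acts like the binary odometer: an odd
power moves the first letter, and an even power `2t` fixes the first letter and restricts to the
`t`-th power of another odometer-like word, so by induction no positive power is trivial.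
-/

section MealyComposition

variable {Q X : Type*} (tr : Q → X → Q) (o : Q → X → X)

def mealyListOut : List Q → X → X
  | [], x => x
  | q :: L, x => o q (mealyListOut L x)

def mealyListTr : List Q → X → List Q
  | [], _ => []
  | q :: L, x => tr q (mealyListOut o L x) :: mealyListTr L x

/-- The composite automaton whose state `[q₁, …, qₙ]` acts as `q₁ ∘ ⋯ ∘ qₙ`. -/
def mealyList : List Q → List X → List X :=
  mealy (mealyListTr tr o) (mealyListOut o)

theorem mealyList_apply_cons (L : List Q) (x : X) (w : List X) :
    mealyList tr o L (x :: w) = mealyListOut o L x :: mealyList tr o (mealyListTr tr o L x) w :=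
  rfl

theorem mealyList_nil : mealyList tr o [] = id := by
  funext w
  induction w with
  | nil => rfl
  | cons x w ih => exact congrArg (x :: ·) ih

theorem mealyList_cons (q : Q) (L : List Q) :
    mealyList tr o (q :: L) = mealy tr o q ∘ mealyList tr o L := by
  funext w
  induction w generalizing q L with
  | nil => rfl
  | cons x w ih => exact congrArg (_ :: ·) (ih _ _)

theorem mealyList_append (A B : List Q) :
    mealyList tr o (A ++ B) = mealyList tr o A ∘ mealyList tr o B := by
  induction A with
  | nil => rw [List.nil_append, mealyList_nil, Function.id_comp]
  | cons q A ih => rw [List.cons_append, mealyList_cons, mealyList_cons, ih, Function.comp_assoc]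

theorem length_mealyListTr (L : List Q) (x : X) : (mealyListTr tr o L x).length = L.length := by
  induction L with
  | nil => rfl
  | cons q L ih => simp [mealyListTr, ih]

end MealyComposition

theorem eq_zero_of_iterate_eq_id {S : Set (List Bool → List Bool)}
    (hflip : ∀ f ∈ S, ∀ w, ∃ v, f (false :: w) = true :: v)
    (hsquare : ∀ f ∈ S, ∃ g ∈ S, ∀ w, f (f (false :: w)) = false :: g w)
    {f : List Bool → List Bool} (hf : f ∈ S) {n : ℕ} (hn : f^[n] = id) : n = 0 := by
  induction n using Nat.strong_induction_on generalizing f with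
  | _ n ih =>
  obtain ⟨g, hg, hfg⟩ := hsquare f hf
  have hiter : ∀ t w, f^[2 * t] (false :: w) = false :: g^[t] w := by
    intro t w
    have hsemi : Function.Semiconj (List.cons false) g f^[2] := fun w => (hfg w).symm
    rw [Function.iterate_mul]
    exact (hsemi.iterate_right t w).symm
  obtain ⟨t, rfl | rfl⟩ := Nat.even_or_odd' n
  · have hgt : g^[t] = id := funext fun w => by
      simpa [hn] using (hiter t w).symm
    by_contra hne
    exact hne (by rw [ih t (by omega) hg hgt])
  · obtain ⟨v, hv⟩ := hflip f hf (g^[t] [])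
    have h := congrFun hn [false]
    rw [Function.iterate_succ_apply', hiter, hv] at h
    simp at h

namespace B4

def countAB (L : List (Fin 4)) : ℕ := L.countP (fun q => q.val ≤ 1)

def IsOdometerWord (L : List (Fin 4)) : Prop := Odd (countAB L) ∧ Even L.length

theorem countAB_cons (q : Fin 4) (L : List (Fin 4)) :
    countAB (q :: L) = countAB L + if q.val ≤ 1 then 1 else 0 := by
  simp [countAB, List.countP_cons]

theorem countAB_append (A B : List (Fin 4)) : countAB (A ++ B) = countAB A + countAB B :=
  List.countP_append

theorem countAB_le_length (L : List (Fin 4)) : countAB L ≤ L.length := List.countP_le_length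

theorem mealyListOut_out4 (L : List (Fin 4)) :
    mealyListOut out4 L = Bool.not^[L.length - countAB L] := by
  induction L with
  | nil => rfl
  | cons q L ih =>
    funext x
    have := countAB_le_length L
    rw [mealyListOut, ih, countAB_cons, List.length_cons]
    by_cases hq : q.val ≤ 1
    · simp [out4, hq]
    · simp only [out4, hq, if_false, add_zero]
      rw [show L.length + 1 - countAB L = (L.length - countAB L) + 1 by omega,
        Function.iterate_succ_apply']

theorem mealyListOut_out4_not (L : List (Fin 4)) (x : Bool) :
    mealyListOut out4 L (!x) = !mealyListOut out4 L x := by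
  rw [mealyListOut_out4]
  exact (Function.Commute.self_iterate Bool.not _ x).symm

theorem IsOdometerWord.mealyListOut_false {L : List (Fin 4)} (hL : IsOdometerWord L) :
    mealyListOut out4 L false = true := by
  have hodd : Odd (L.length - countAB L) := by
    have := countAB_le_length L
    have hab := Nat.odd_iff.1 hL.1
    have hlen := Nat.even_iff.1 hL.2
    exact Nat.odd_iff.2 (by omega)
  rw [mealyListOut_out4, Bool.involutive_not.iterate_odd hodd]
  rfl

theorem countAB_mealyListTr_add_not_mod_two (L : List (Fin 4)) (x : Bool) :
    (countAB (mealyListTr tr4 out4 L x) + countAB (mealyListTr tr4 out4 L (!x))) % 2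
      = countAB L % 2 := by
  induction L with
  | nil => rfl
  | cons q L ih =>
    have hq : ∀ y,
        ((if (tr4 q y).val ≤ 1 then 1 else 0) + (if (tr4 q (!y)).val ≤ 1 then 1 else 0)) % 2
          = (if q.val ≤ 1 then 1 else 0) % 2 := by
      revert q; decide
    rw [mealyListTr, mealyListTr, mealyListOut_out4_not, countAB_cons, countAB_cons, countAB_cons]
    have := hq (mealyListOut out4 L x)
    omega

theorem IsOdometerWord.sections {L : List (Fin 4)} (hL : IsOdometerWord L) :
    IsOdometerWord (mealyListTr tr4 out4 L true ++ mealyListTr tr4 out4 L false) := by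
  refine ⟨?_, ?_⟩
  · have h := countAB_mealyListTr_add_not_mod_two L true
    have hL := Nat.odd_iff.1 hL.1
    rw [countAB_append, Nat.odd_iff]
    rw [Bool.not_true] at h
    omega
  · rw [List.length_append, length_mealyListTr, length_mealyListTr]
    exact Even.add_self _

theorem IsOdometerWord.iterate_eq_id {L : List (Fin 4)} (hL : IsOdometerWord L) {n : ℕ}
    (hn : (mealyList tr4 out4 L)^[n] = id) : n = 0 := by
  refine eq_zero_of_iterate_eq_id (S := {f | ∃ L, IsOdometerWord L ∧ f = mealyList tr4 out4 L})
    ?_ ?_ ⟨L, hL, rfl⟩ hn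
  · rintro _ ⟨L, hL, rfl⟩ w
    exact ⟨_, by rw [mealyList_apply_cons, hL.mealyListOut_false]⟩
  · rintro _ ⟨L, hL, rfl⟩
    refine ⟨_, ⟨_, hL.sections, rfl⟩, fun w => ?_⟩
    have h1 : mealyListOut out4 L true = false := by
      rw [← Bool.not_false, mealyListOut_out4_not, hL.mealyListOut_false, Bool.not_true]
    rw [mealyList_apply_cons, mealyList_apply_cons, hL.mealyListOut_false, h1, mealyList_append]
    rfl

theorem coe_prod_map_actE (L : List (Fin 4)) : ⇑(L.map actE).prod = mealyList tr4 out4 L := by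
  induction L with
  | nil => exact (mealyList_nil _ _).symm
  | cons q L ih => rw [List.map_cons, List.prod_cons, Equiv.Perm.coe_mul, ih, mealyList_cons]; rfl

theorem IsOdometerWord.not_isOfFinOrder {L : List (Fin 4)} (hL : IsOdometerWord L) :
    ¬ IsOfFinOrder (L.map actE).prod := by
  rw [isOfFinOrder_iff_pow_eq_one]
  rintro ⟨n, hn, h⟩
  have h' := congrArg DFunLike.coe h
  rw [Equiv.Perm.coe_pow, coe_prod_map_actE, Equiv.Perm.coe_one] at h'
  exact hn.ne' (hL.iterate_eq_id h')

end B4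

/-- the group G generated by the automaton B₄ is infinite. -/
theorem b4_group_infinite :
    Infinite (Subgroup.closure (Set.range actE) : Subgroup (Equiv.Perm (List Bool))) := by
  let da : Equiv.Perm (List Bool) := ([3, 0].map actE).prod
  have hda_mem : da ∈ Subgroup.closure (Set.range actE) :=
    Subgroup.list_prod_mem _ fun _ hx => by
      obtain ⟨q, -, rfl⟩ := List.mem_map.1 hx
      exact Subgroup.subset_closure ⟨q, rfl⟩
  have hda : ¬ IsOfFinOrder da := B4.IsOdometerWord.not_isOfFinOrder ⟨by decide, by decide⟩
  exact Set.infinite_coe_iff.2 ((infinite_zpowers.2 hda).mono (Subgroup.zpowers_le.2 hda_mem))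
end

section
/- Let A be a finite invertible Mealy automaton and Â its dual automaton. Then the semigroup S(A) generated by the states of A is finite if and only if the semigroup S(Â) generated by the states of Â is finite. -/
theorem Function.FactorsThrough.finite_range {α β γ : Type*} [Finite β] {f : α → β} {g : α → γ}
    (h : g.FactorsThrough f) : (Set.range g).Finite := by
  rcases isEmpty_or_nonempty α with _ | ⟨⟨a₀⟩⟩
  · simp [Set.range_eq_empty]
  · refine (Set.finite_range (Function.extend f g fun _ => g a₀)).subset ?_
    rintro _ ⟨a, rfl⟩
    exact ⟨f a, h.extend_apply _ a⟩

namespace Mealy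

variable {Q X : Type*}

/-- The word `q₁ ⋯ qₙ` acts as `qₙ ∘ ⋯ ∘ q₁`: the head acts first, the order in which the dual
automaton reads words of states. -/
def wordAct (tr : Q → X → Q) (o : Q → X → X) (p : List Q) : Function.End (List X) :=
  fun v => p.foldl (fun v q => mealy tr o q v) v

variable (tr : Q → X → Q) (o : Q → X → X)

theorem wordAct_append (p p' : List Q) :
    wordAct tr o (p ++ p') = wordAct tr o p' * wordAct tr o p := by
  funext v
  exact List.foldl_append ..

theorem range_wordAct :
    Set.range (wordAct tr o) =
      Submonoid.closure (Set.range (mealy tr o) : Set (Function.End (List X))) := by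
  apply le_antisymm
  · rintro _ ⟨p, rfl⟩
    induction p with
    | nil => exact one_mem _
    | cons q p ih => exact mul_mem ih (Submonoid.subset_closure ⟨q, rfl⟩)
  · let M : Submonoid (Function.End (List X)) :=
      { carrier := Set.range (wordAct tr o)
        one_mem' := ⟨[], rfl⟩
        mul_mem' := by
          rintro _ _ ⟨p, rfl⟩ ⟨p', rfl⟩
          exact ⟨p' ++ p, wordAct_append tr o p' p⟩ }
    exact (Submonoid.closure_le (S := M)).mpr (by rintro _ ⟨q, rfl⟩; exact ⟨[q], rfl⟩)

theorem finite_closure_iff_finite_range_wordAct :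
    Finite (Subsemigroup.closure (Set.range (mealy tr o)) :
        Subsemigroup (Function.End (List X))) ↔ (Set.range (wordAct tr o)).Finite := by
  rw [range_wordAct, Submonoid.closure_eq_one_union, Set.finite_union]
  exact ⟨fun _ => ⟨Set.finite_singleton 1, Set.toFinite _⟩, fun h => h.2.to_subtype⟩

theorem wordAct_apply_nil (p : List Q) : wordAct tr o p [] = [] := by
  induction p with
  | nil => rfl
  | cons q p ih => exact ih

theorem wordAct_apply_cons (p : List Q) (x : X) (w : List X) :
    wordAct tr o p (x :: w) = p.foldl (fun x q => o q x) x ::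
      wordAct tr o (mealy (fun x q => o q x) (fun x q => tr q x) x p) w := by
  induction p generalizing x w with
  | nil => rfl
  | cons q p ih => exact ih (o q x) (mealy tr o (tr q x) w)

theorem wordAct_eq_of_forall_foldl_eq {p p' : List Q}
    (h : ∀ (w : List X) (x : X),
      (wordAct (fun x q => o q x) (fun x q => tr q x) w p).foldl (fun x q => o q x) x =
        (wordAct (fun x q => o q x) (fun x q => tr q x) w p').foldl (fun x q => o q x) x) :
    wordAct tr o p = wordAct tr o p' := by
  funext v
  induction v generalizing p p' with
  | nil => rw [wordAct_apply_nil, wordAct_apply_nil]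
  | cons x v ih =>
    rw [wordAct_apply_cons, wordAct_apply_cons]
    exact congrArg₂ List.cons (h [] x) (ih fun w y => h (x :: w) y)

theorem finite_range_wordAct_of_dual [Finite X]
    (h : (Set.range (wordAct (fun x q => o q x) (fun x q => tr q x))).Finite) :
    (Set.range (wordAct tr o)).Finite := by
  have := h.to_subtype
  refine Function.FactorsThrough.finite_range
    (f := fun p (d : Set.range (wordAct (fun x q => o q x) (fun x q => tr q x))) x =>
      (d.1 p).foldl (fun x q => o q x) x) ?_
  intro p p' hp
  exact wordAct_eq_of_forall_foldl_eq tr o fun w x => congrFun (congrFun hp ⟨_, w, rfl⟩) x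

end Mealy

theorem dual_semigroup_finite_iff_general {Q X : Type*} [Fintype Q] [Fintype X]
    (π : Q → X → Q) (lam : Q → X → X) :
    Finite (Subsemigroup.closure (Set.range (mealy π lam)) :
        Subsemigroup (Function.End (List X))) ↔
      Finite (Subsemigroup.closure (Set.range (mealy (fun x q => lam q x) (fun x q => π q x))) :
        Subsemigroup (Function.End (List Q))) := by
  rw [Mealy.finite_closure_iff_finite_range_wordAct, Mealy.finite_closure_iff_finite_range_wordAct]
  exact ⟨Mealy.finite_range_wordAct_of_dual _ _, Mealy.finite_range_wordAct_of_dual π lam⟩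

/-- for a finite invertible Mealy automaton A = (Q,X,π,λ), the
semigroup S(A) generated by the states of A (acting on X*) is finite if and
only if the semigroup generated by the dual automaton (acting on Q*) is finite. -/
theorem dual_semigroup_finite_iff {Q X : Type*} [Fintype Q] [Fintype X]
    (π : Q → X → Q) (lam : Q → X → X)
    (hinv : ∀ q, Function.Bijective (lam q)) :
    Finite (Subsemigroup.closure (Set.range (mealy π lam)) :
        Subsemigroup (Function.End (List X))) ↔
      Finite (Subsemigroup.closure (Set.range (mealy (fun x q => lam q x) (fun x q => π q x))) :
        Subsemigroup (Function.End (List Q))) :=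
  dual_semigroup_finite_iff_general π lam
end

section
/- In the group Γ generated by the dual automaton of B₄ (states 𝕆 = (𝕆,𝕆,𝟙,𝟙)(a c d) and 𝟙 = (𝟙,𝟙,𝕆,𝕆)(a b c d) acting on {a,b,c,d}*), the element 𝕆𝟙⁻¹ equals the 'constant' automorphism that applies the transposition (a b) at every vertex, and 𝕆⁻¹𝟙 equals the constant automorphism applying (b c) at every vertex. -/
/-! Exchanging the two states 𝕆 ↔ 𝟙 of the dual automaton while relabelling input letters by
(a b), or alternatively output letters by (b c), leaves its transition and output tables
unchanged; by induction on words, the induced actions on {a,b,c,d}* then agree. -/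

theorem mealy_map_eq_map_mealy {Q X : Type*} {tr : Q → X → Q} {o : Q → X → X} {φ : Q → Q}
    {π ψ : X → X} (hout : ∀ q x, o (φ q) (π x) = ψ (o q x))
    (htr : ∀ q x, tr (φ q) (π x) = φ (tr q x)) (q : Q) (w : List X) :
    mealy tr o (φ q) (w.map π) = (mealy tr o q w).map ψ := by
  induction w generalizing q with
  | nil => rfl
  | cons x w ih => simp only [List.map_cons, mealy, hout, htr, ih]

theorem dAct_true_map_swap_zero_one (g : List (Fin 4)) :
    dAct true (g.map (Equiv.swap 0 1)) = dAct false g := by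
  simpa [dAct] using mealy_map_eq_map_mealy (tr := fun x q => out4 q x) (o := fun x q => tr4 q x)
    (φ := not) (ψ := id) (by decide) (by decide) false g

theorem dAct_true_eq_map_swap_one_two (g : List (Fin 4)) :
    dAct true g = (dAct false g).map (Equiv.swap 1 2) := by
  simpa [dAct] using mealy_map_eq_map_mealy (tr := fun x q => out4 q x) (o := fun x q => tr4 q x)
    (φ := not) (π := id) (by decide) (by decide) false g

/-- 𝕆𝟙⁻¹ is the constant automorphism applying the transposition
(a b) at every vertex, and 𝕆⁻¹𝟙 is the constant automorphism applying (b c) at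
every vertex (with the convention gh(x) = h(g(x)); each identity is stated in
an equivalent inverse-free form, using that 𝕆 and 𝟙 are bijections):
𝕆𝟙⁻¹ = (a b)‾  ↔  ∀g, 𝕆(g) = 𝟙((a b)‾ g), and
𝕆⁻¹𝟙 = (b c)‾  ↔  ∀g, 𝟙(g) = (b c)‾(𝕆 g). -/
theorem dual_constant_automorphisms :
    (∀ g : List (Fin 4), dAct false g = dAct true (g.map ⇑(Equiv.swap (0 : Fin 4) 1))) ∧
    (∀ g : List (Fin 4), dAct true g = (dAct false g).map ⇑(Equiv.swap (1 : Fin 4) 2)) :=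
  ⟨fun g => (dAct_true_map_swap_zero_one g).symm, dAct_true_eq_map_swap_one_two⟩
end

section
/- The elements α = 𝟙·(a c)‾ and β = 𝕆·(a c)‾ of the group Γ (dual to B₄) satisfy the wreath recursions α = (α,α,β,β)(a b)(c d) and β = (β,β,α,α)(c d), and α² = β² = 1; moreover Γ = ⟨α, β, (b c)‾⟩. -/
/-- The 'constant' automorphism of the 4-ary tree applying the permutation `p`
at every vertex. -/
def mapPerm (p : Equiv.Perm (Fin 4)) : Equiv.Perm (List (Fin 4)) where
  toFun := List.map ⇑p
  invFun := List.map ⇑p.symm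
  left_inv := fun l => by simp
  right_inv := fun l => by simp

/-- α = 𝟙·(a c)‾ (apply 𝟙 first, then the constant automorphism (a c)‾). -/
noncomputable def alphaE : Equiv.Perm (List (Fin 4)) :=
  mapPerm (Equiv.swap 0 2) * dActE true

/-- β = 𝕆·(a c)‾. -/
noncomputable def betaE : Equiv.Perm (List (Fin 4)) :=
  mapPerm (Equiv.swap 0 2) * dActE false

/-! The wreath recursions of `α = (a c)‾ 𝟙` and `β = (a c)‾ 𝕆` are read off from those of `𝟙`
and `𝕆`, and `α² = β² = 1` follows from them by induction on the word. For generation, the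
identities `(b c)‾ 𝟙 = 𝕆` and `𝟙 (a b)‾ = 𝕆`, again proved letter by letter, put `(b c)‾ = 𝕆 𝟙⁻¹`
and `(a b)‾ = 𝟙⁻¹ 𝕆` into `⟨𝕆, 𝟙⟩`; in `⟨α, β, (b c)‾⟩` one has `(a b)‾ = β α⁻¹` instead. Either
way both groups contain `(a c)‾ = (a b)‾ (b c)‾ (a b)‾`, which turns `𝟙, 𝕆` into `α, β` and
back. -/

open Equiv

lemma mapPerm_cons (p : Perm (Fin 4)) (q : Fin 4) (w : List (Fin 4)) :
    mapPerm p (q :: w) = p q :: mapPerm p w := rfl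

lemma mapPerm_mul (p q : Perm (Fin 4)) : mapPerm (p * q) = mapPerm p * mapPerm q := by
  ext w : 1
  simp [mapPerm]

lemma mapPerm_inv (p : Perm (Fin 4)) : mapPerm p⁻¹ = (mapPerm p)⁻¹ := rfl

lemma mapPerm_swap_zero_two_mem {H : Subgroup (Perm (List (Fin 4)))}
    (h01 : mapPerm (swap 0 1) ∈ H) (h12 : mapPerm (swap 1 2) ∈ H) :
    mapPerm (swap 0 2) ∈ H := by
  have h : swap (0 : Fin 4) 2 = swap 0 1 * swap 1 2 * swap 0 1 := by decide
  rw [h, mapPerm_mul, mapPerm_mul]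
  exact mul_mem (mul_mem h01 h12) h01

lemma dActE_cons (b : Bool) (q : Fin 4) (w : List (Fin 4)) :
    dActE b (q :: w) = tr4 q b :: dActE (out4 q b) w := rfl

lemma out4_not (q : Fin 4) (b : Bool) : out4 q (!b) = !out4 q b := by
  revert q b; decide

lemma mapPerm_swap_one_two_mul_dActE (b : Bool) :
    mapPerm (swap 1 2) * dActE b = dActE (!b) := by
  have h_tr : ∀ q b, swap (1 : Fin 4) 2 (tr4 q b) = tr4 q (!b) := by decide
  ext w : 1
  induction w generalizing b with
  | nil => rfl
  | cons q w ih =>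
    simp only [Perm.mul_apply, dActE_cons, mapPerm_cons, out4_not] at ih ⊢
    rw [← ih, h_tr]

lemma dActE_mul_mapPerm_swap_zero_one (b : Bool) :
    dActE b * mapPerm (swap 0 1) = dActE (!b) := by
  have h_tr : ∀ q b, tr4 (swap 0 1 q) b = tr4 q (!b) := by decide
  have h_out : ∀ q, out4 (swap 0 1 q) = out4 q := by decide
  ext w : 1
  induction w generalizing b with
  | nil => rfl
  | cons q w ih =>
    simp only [Perm.mul_apply, dActE_cons, mapPerm_cons, out4_not] at ih ⊢
    rw [← ih, h_tr, h_out]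

lemma mapPerm_swap_one_two_eq : mapPerm (swap 1 2) = dActE false * (dActE true)⁻¹ :=
  eq_mul_inv_of_mul_eq (mapPerm_swap_one_two_mul_dActE true)

lemma mapPerm_swap_zero_one_eq : mapPerm (swap 0 1) = (dActE true)⁻¹ * dActE false :=
  eq_inv_mul_of_mul_eq (dActE_mul_mapPerm_swap_zero_one true)

lemma alphaE_cons_zero (g : List (Fin 4)) : alphaE (0 :: g) = 1 :: alphaE g := rfl
lemma alphaE_cons_one (g : List (Fin 4)) : alphaE (1 :: g) = 0 :: alphaE g := rfl
lemma alphaE_cons_two (g : List (Fin 4)) : alphaE (2 :: g) = 3 :: betaE g := rfl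
lemma alphaE_cons_three (g : List (Fin 4)) : alphaE (3 :: g) = 2 :: betaE g := rfl
lemma betaE_cons_zero (g : List (Fin 4)) : betaE (0 :: g) = 0 :: betaE g := rfl
lemma betaE_cons_one (g : List (Fin 4)) : betaE (1 :: g) = 1 :: betaE g := rfl
lemma betaE_cons_two (g : List (Fin 4)) : betaE (2 :: g) = 3 :: alphaE g := rfl
lemma betaE_cons_three (g : List (Fin 4)) : betaE (3 :: g) = 2 :: alphaE g := rfl

lemma alphaE_alphaE_and_betaE_betaE (g : List (Fin 4)) :
    alphaE (alphaE g) = g ∧ betaE (betaE g) = g := by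
  induction g with
  | nil => exact ⟨rfl, rfl⟩
  | cons q g ih =>
    fin_cases q <;>
      simp only [Fin.zero_eta, Fin.mk_one, Fin.reduceFinMk, alphaE_cons_zero, alphaE_cons_one,
        alphaE_cons_two, alphaE_cons_three, betaE_cons_zero, betaE_cons_one, betaE_cons_two,
        betaE_cons_three, ih, and_self]

lemma betaE_mul_alphaE_inv : betaE * alphaE⁻¹ = mapPerm (swap 0 1) := by
  have h : swap (0 : Fin 4) 2 * swap 1 2 * (swap 0 2)⁻¹ = swap 0 1 := by decide
  rw [← h, mapPerm_mul, mapPerm_mul, mapPerm_inv, mapPerm_swap_one_two_eq, betaE, alphaE]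
  group

/-- α and β satisfy the wreath recursions
α = (α,α,β,β)(a b)(c d) and β = (β,β,α,α)(c d), are involutions, and together
with (b c)‾ they generate Γ = ⟨𝕆,𝟙⟩. -/
theorem alpha_beta_recursions_and_generation :
    (∀ g, alphaE ((0 : Fin 4) :: g) = 1 :: alphaE g) ∧
    (∀ g, alphaE ((1 : Fin 4) :: g) = 0 :: alphaE g) ∧
    (∀ g, alphaE ((2 : Fin 4) :: g) = 3 :: betaE g) ∧
    (∀ g, alphaE ((3 : Fin 4) :: g) = 2 :: betaE g) ∧
    (∀ g, betaE ((0 : Fin 4) :: g) = 0 :: betaE g) ∧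
    (∀ g, betaE ((1 : Fin 4) :: g) = 1 :: betaE g) ∧
    (∀ g, betaE ((2 : Fin 4) :: g) = 3 :: alphaE g) ∧
    (∀ g, betaE ((3 : Fin 4) :: g) = 2 :: alphaE g) ∧
    (∀ g, alphaE (alphaE g) = g) ∧ (∀ g, betaE (betaE g) = g) ∧
    Subgroup.closure {alphaE, betaE, mapPerm (Equiv.swap 1 2)} =
      Subgroup.closure {dActE false, dActE true} := by
  refine ⟨alphaE_cons_zero, alphaE_cons_one, alphaE_cons_two, alphaE_cons_three,
    betaE_cons_zero, betaE_cons_one, betaE_cons_two, betaE_cons_three,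
    fun g => (alphaE_alphaE_and_betaE_betaE g).1, fun g => (alphaE_alphaE_and_betaE_betaE g).2,
    le_antisymm ?_ ?_⟩
  · set Γ := Subgroup.closure {dActE false, dActE true}
    have hO : dActE false ∈ Γ := Subgroup.subset_closure (by simp)
    have hI : dActE true ∈ Γ := Subgroup.subset_closure (by simp)
    have h12 : mapPerm (swap 1 2) ∈ Γ := by
      rw [mapPerm_swap_one_two_eq]; exact mul_mem hO (inv_mem hI)
    have h02 : mapPerm (swap 0 2) ∈ Γ := by
      refine mapPerm_swap_zero_two_mem ?_ h12
      rw [mapPerm_swap_zero_one_eq]; exact mul_mem (inv_mem hI) hO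
    rw [Subgroup.closure_le]
    rintro x (rfl | rfl | rfl)
    exacts [mul_mem h02 hI, mul_mem h02 hO, h12]
  · set H := Subgroup.closure {alphaE, betaE, mapPerm (swap 1 2)}
    have hα : alphaE ∈ H := Subgroup.subset_closure (by simp)
    have hβ : betaE ∈ H := Subgroup.subset_closure (by simp)
    have h12 : mapPerm (swap 1 2) ∈ H := Subgroup.subset_closure (by simp)
    have h02 : mapPerm (swap 0 2) ∈ H := by
      refine mapPerm_swap_zero_two_mem ?_ h12
      rw [← betaE_mul_alphaE_inv]; exact mul_mem hβ (inv_mem hα)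
    rw [Subgroup.closure_le]
    rintro x (rfl | rfl)
    exacts [inv_mul_cancel_left _ (dActE false) ▸ mul_mem (inv_mem h02) hβ,
      inv_mul_cancel_left _ (dActE true) ▸ mul_mem (inv_mem h02) hα]
end

section
/- Let Γ be the group dual to B₄ acting on the 4-ary tree over {a,b,c,d}, and let t ∈ {a,b,c,d}. For any v ∈ Γ and any word h, v|_{tt} acts on words the same way as v, i.e., v|_{g·tt}(h) = v|_g(h) for all words g with v(g·tt) = v(g)·t't' for some letter t'. Consequently, if v fixes all vertices of the subtree T̂_n (words of length ≤ n without double letters) then v fixes all vertices of level n of the full tree: Stab_Γ(n) = Stab_Γ(T̂_n). -/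
/-- The group Γ generated by the dual automaton of B4. -/
noncomputable def Gamma : Subgroup (Equiv.Perm (List (Fin 4))) :=
  Subgroup.closure {dActE false, dActE true}

/-!
Γ consists of level- and prefix-preserving permutations of the words over {a,b,c,d}, and in the
dual automaton reading a double letter `tt` from any state returns to that state and emits a
double letter, because `t` acts on the binary alphabet by an involution that does not change
the letter emitted next. Hence every generator `v` of Γ satisfies
`v (g ++ [t, t] ++ h) = v g ++ [t', t'] ++ v|_g h`, and this property survives products and,
thanks to the finiteness of the alphabet, inverses. A word with a double letter `g ++ [t, t] ++ h`
is then fixed by `v` as soon as the shorter words `g ++ [t]` and `g ++ h` are, which gives the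
stabilizer statement by induction on the length.
-/

open Equiv Function

variable {X : Type*}

lemma length_mealy {Q : Type*} (tr : Q → X → Q) (o : Q → X → X) (q : Q) (w : List X) :
    (mealy tr o q w).length = w.length := by
  induction w generalizing q with
  | nil => rfl
  | cons x w ih => simp [mealy, ih]

lemma mealy_append {Q : Type*} (tr : Q → X → Q) (o : Q → X → X) (q : Q) (g h : List X) :
    mealy tr o q (g ++ h) = mealy tr o q g ++ mealy tr o (g.foldl tr q) h := by
  induction g generalizing q with
  | nil => rfl
  | cons x g ih => simp [mealy, ih]

/-- The section `v|_g` of `v` at the vertex `g`, evaluated at `h`. -/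
def treeSection (v : Perm (List X)) (g h : List X) : List X :=
  (v (g ++ h)).drop g.length

variable (X) in
def treeAut : Subgroup (Perm (List X)) where
  carrier := {v | (∀ w, (v w).length = w.length) ∧ ∀ g h, v g <+: v (g ++ h)}
  one_mem' := ⟨fun _ => rfl, fun g h => List.prefix_append g h⟩
  mul_mem' := by
    rintro v u ⟨hvl, hvp⟩ ⟨hul, hup⟩
    refine ⟨fun w => by simp [hvl, hul], fun g h => ?_⟩
    obtain ⟨k, hk⟩ := hup g h
    simpa [← hk] using hvp (u g) k
  inv_mem' := by
    rintro v ⟨hvl, hvp⟩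
    have hl : ∀ w, (v⁻¹ w).length = w.length := fun w => by
      simpa using (hvl (v⁻¹ w)).symm
    refine ⟨hl, fun g h => ?_⟩
    obtain ⟨w, hw⟩ : ∃ w, v w = g ++ h := ⟨v⁻¹ (g ++ h), by simp⟩
    have hwl : w.length = g.length + h.length := by rw [← hvl, hw, List.length_append]
    have hg : v (w.take g.length) = g := by
      have hpre := hvp (w.take g.length) (w.drop g.length)
      rw [List.take_append_drop, hw, List.prefix_iff_eq_take] at hpre
      rw [hpre, hvl, List.length_take, hwl, min_eq_left (by omega), List.take_left]
    rw [← hw, ← hg]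
    simpa using List.take_prefix _ w

namespace treeAut

variable {v u : Perm (List X)}

lemma length_apply (hv : v ∈ treeAut X) (w : List X) : (v w).length = w.length := hv.1 w

lemma apply_prefix (hv : v ∈ treeAut X) (g h : List X) : v g <+: v (g ++ h) := hv.2 g h

lemma apply_eq_take (hv : v ∈ treeAut X) (g h : List X) :
    v g = (v (g ++ h)).take g.length := by
  rw [List.prefix_iff_eq_take.1 (apply_prefix hv g h), length_apply hv]

lemma apply_append (hv : v ∈ treeAut X) (g h : List X) :
    v (g ++ h) = v g ++ treeSection v g h := by
  rw [treeSection, ← length_apply hv g, List.prefix_iff_eq_append.1 (apply_prefix hv g h)]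

lemma treeSection_mul (hu : u ∈ treeAut X) (g h : List X) :
    treeSection (v * u) g h = treeSection v (u g) (treeSection u g h) := by
  rw [treeSection, Perm.mul_apply, apply_append hu g h, ← length_apply hu g]
  rfl

lemma treeSection_inv (hv : v ∈ treeAut X) (g h : List X) :
    treeSection v (v⁻¹ g) (treeSection v⁻¹ g h) = h := by
  rw [← treeSection_mul (inv_mem hv), mul_inv_cancel, treeSection]
  simp

lemma apply_eq_self_of_length_le [Nonempty X] (hv : v ∈ treeAut X) {n : ℕ}
    (hfix : ∀ w : List X, w.length = n → v w = w) {w : List X} (hw : w.length ≤ n) :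
    v w = w := by
  let x : X := Classical.arbitrary X
  have hpad := hfix (w ++ List.replicate (n - w.length) x) (by simp; omega)
  rw [apply_eq_take hv w (List.replicate (n - w.length) x), hpad, List.take_left]

end treeAut

variable (X) in
def doubleLetterAut [Finite X] : Subgroup (Perm (List X)) where
  carrier := {v | v ∈ treeAut X ∧
    ∀ g t h, ∃ t', v (g ++ [t, t] ++ h) = v g ++ [t', t'] ++ treeSection v g h}
  one_mem' := ⟨one_mem _, fun g t h => ⟨t, by simp [treeSection]⟩⟩
  mul_mem' := by
    rintro v u ⟨hvT, hvD⟩ ⟨huT, huD⟩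
    refine ⟨mul_mem hvT huT, fun g t h => ?_⟩
    obtain ⟨s, hs⟩ := huD g t h
    obtain ⟨s', hs'⟩ := hvD (u g) s (treeSection u g h)
    exact ⟨s', by rw [Perm.mul_apply, hs, hs', treeAut.treeSection_mul huT, Perm.mul_apply]⟩
  inv_mem' := by
    rintro v ⟨hvT, hvD⟩
    refine ⟨inv_mem hvT, fun g t h => ?_⟩
    have hsec := treeAut.treeSection_inv hvT g h
    have hvg : v (v⁻¹ g) = g := by simp
    -- `F` is injective on the finite alphabet, so some double letter `s s` is sent to `t t`.
    choose F hF using fun s => hvD (v⁻¹ g) s (treeSection v⁻¹ g h)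
    have hF_inj : Injective F := fun s s' hss => by
      have := v.injective ((hF s).trans (hss ▸ (hF s').symm))
      simpa using this
    obtain ⟨s, rfl⟩ := Finite.surjective_of_injective hF_inj t
    refine ⟨s, ?_⟩
    rw [Perm.inv_eq_iff_eq, hF, hvg, hsec]

namespace doubleLetterAut

variable [Finite X] {v : Perm (List X)}

lemma mem_treeAut (hv : v ∈ doubleLetterAut X) : v ∈ treeAut X := hv.1

lemma exists_apply_append_pair_append (hv : v ∈ doubleLetterAut X) (g : List X) (t : X)
    (h : List X) : ∃ t', v (g ++ [t, t] ++ h) = v g ++ [t', t'] ++ treeSection v g h :=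
  hv.2 g t h

lemma treeSection_append_pair (hv : v ∈ doubleLetterAut X) (g : List X) (t : X) (h : List X) :
    treeSection v (g ++ [t, t]) h = treeSection v g h := by
  obtain ⟨t', ht'⟩ := exists_apply_append_pair_append hv g t h
  have hl : (g ++ [t, t]).length = (v g ++ [t', t']).length := by
    simp [treeAut.length_apply (mem_treeAut hv)]
  rw [treeSection, ht', hl, List.drop_left]

lemma apply_append_pair_append_eq_self (hv : v ∈ doubleLetterAut X) {g h : List X} {t : X}
    (hg : v (g ++ [t]) = g ++ [t]) (hgh : v (g ++ h) = g ++ h) :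
    v (g ++ [t, t] ++ h) = g ++ [t, t] ++ h := by
  have hT := mem_treeAut hv
  obtain ⟨t', ht'⟩ := exists_apply_append_pair_append hv g t h
  have hvg : v g = g := by rw [treeAut.apply_eq_take hT g [t], hg, List.take_left]
  have hsec : treeSection v g h = h := by simp [treeSection, hgh]
  have hpre := treeAut.apply_prefix hT (g ++ [t]) ([t] ++ h)
  rw [show g ++ [t] ++ ([t] ++ h) = g ++ [t, t] ++ h by simp, hg, ht', hvg, hsec] at hpre
  obtain rfl : t = t' := by simpa using hpre
  rw [ht', hvg, hsec]

lemma apply_eq_self_of_isChain (hv : v ∈ doubleLetterAut X) {n : ℕ}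
    (hfix : ∀ w : List X, w.length ≤ n → w.IsChain (· ≠ ·) → v w = w) (w : List X)
    (hw : w.length ≤ n) : v w = w := by
  by_cases hchain : w.IsChain (· ≠ ·)
  · exact hfix w hw hchain
  obtain ⟨t, g, h, hw_eq⟩ : ∃ t g h, w = g ++ t :: t :: h := by
    simpa [List.isChain_iff_forall_rel_of_append_cons_cons] using hchain
  have hwl : w.length = g.length + h.length + 2 := by simp [hw_eq]; omega
  have hgt := apply_eq_self_of_isChain hv hfix (g ++ [t]) (by simp; omega)
  have hgh := apply_eq_self_of_isChain hv hfix (g ++ h) (by simp; omega)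
  simpa [hw_eq] using apply_append_pair_append_eq_self hv hgt hgh
termination_by w.length
decreasing_by all_goals simp; omega

lemma ofBijective_mealy_mem {Q : Type*} {tr : Q → X → Q} {o : Q → X → X}
    (htr : ∀ q x, tr (tr q x) x = q) (ho : ∀ q x, o (tr q x) x = o q x) (q : Q)
    (hbij : Bijective (mealy tr o q)) : Equiv.ofBijective _ hbij ∈ doubleLetterAut X := by
  have hsec : ∀ g h,
      treeSection (Equiv.ofBijective _ hbij) g h = mealy tr o (g.foldl tr q) h := by
    intro g h
    rw [treeSection, ofBijective_apply, mealy_append, ← length_mealy tr o q g, List.drop_left]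
  refine ⟨⟨length_mealy tr o q, fun g h => ?_⟩, fun g t h => ⟨o (g.foldl tr q) t, ?_⟩⟩
  · simp only [ofBijective_apply, mealy_append]
    exact List.prefix_append _ _
  · simp only [hsec, ofBijective_apply, List.append_assoc, mealy_append]
    simp [mealy, htr, ho]

end doubleLetterAut

/-- for any v ∈ Γ, the section of v at a double letter tt acts as
v itself: v|_{g·tt}(h) = v|_g(h); consequently an element of Γ fixes all
vertices of the subtree T̂_n (words of length ≤ n without double letters) if
and only if it fixes all vertices of level n of the full tree,
i.e. Stab_Γ(n) = Stab_Γ(T̂_n). -/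
theorem section_at_double_letters_and_stabilizers :
    (∀ v ∈ Gamma, ∀ (g h : List (Fin 4)) (t : Fin 4),
        (v (g ++ [t, t] ++ h)).drop (g.length + 2) = (v (g ++ h)).drop g.length) ∧
    (∀ v ∈ Gamma, ∀ n : ℕ,
        (∀ w : List (Fin 4), w.length ≤ n → w.Chain' (· ≠ ·) → v w = w) ↔
        (∀ w : List (Fin 4), w.length = n → v w = w)) := by
  have hΓ : Gamma ≤ doubleLetterAut (Fin 4) := by
    refine (Subgroup.closure_le _).2 ?_
    rintro _ (rfl | rfl) <;>
      exact doubleLetterAut.ofBijective_mealy_mem (by decide) (by decide) _ _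
  refine ⟨fun v hv g h t => ?_, fun v hv n => ⟨fun hfix w hw => ?_, fun hfix w hw _ => ?_⟩⟩
  · simpa [treeSection] using doubleLetterAut.treeSection_append_pair (hΓ hv) g t h
  · exact doubleLetterAut.apply_eq_self_of_isChain (hΓ hv) hfix w hw.le
  · exact treeAut.apply_eq_self_of_length_le (doubleLetterAut.mem_treeAut (hΓ hv)) hfix hw
end

section
/- In the group Γ dual to B₄, for every element g stabilizing the first level of the 4-ary tree pointwise, each section g|_x (x ∈ {a,b,c,d}) acts on the first level by an even permutation of {a,b,c,d}. -/
open Equiv Equiv.Perm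

theorem Equiv.Perm.apply_inv_self {β : Type*} (f : Perm β) (x : β) : f (f⁻¹ x) = x :=
  f.apply_symm_apply x

section TwoLevels

variable {α : Type*}

def ActsOnTwoLevelsBy (g : Perm (List α)) (σ : Perm α) (p : α → Perm α) : Prop :=
  (∀ q, g [q] = [σ q]) ∧ ∀ x q, g [x, q] = [σ x, p x q]

theorem actsOnTwoLevelsBy_one : ActsOnTwoLevelsBy (1 : Perm (List α)) 1 fun _ => 1 :=
  ⟨fun _ => rfl, fun _ _ => rfl⟩

theorem ActsOnTwoLevelsBy.mul {g h : Perm (List α)} {σ τ : Perm α} {p r : α → Perm α}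
    (hg : ActsOnTwoLevelsBy g σ p) (hh : ActsOnTwoLevelsBy h τ r) :
    ActsOnTwoLevelsBy (g * h) (σ * τ) fun x => p (τ x) * r x :=
  ⟨fun q => by simp [hh.1, hg.1], fun x q => by simp [hh.2, hg.2]⟩

theorem ActsOnTwoLevelsBy.inv {g : Perm (List α)} {σ : Perm α} {p : α → Perm α}
    (hg : ActsOnTwoLevelsBy g σ p) :
    ActsOnTwoLevelsBy g⁻¹ σ⁻¹ fun x => (p (σ⁻¹ x))⁻¹ := by
  refine ⟨fun q => ?_, fun x q => ?_⟩
  · rw [inv_eq_iff_eq, hg.1, Perm.apply_inv_self]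
  · rw [inv_eq_iff_eq, hg.2, Perm.apply_inv_self, Perm.apply_inv_self]

end TwoLevels

section SignTwist

variable {α : Type*} [Fintype α] [DecidableEq α]

def signTwistSubgroup (ε : α → ℤˣ) : Subgroup (Perm (List α)) where
  carrier := {g | ∃ σ p, ActsOnTwoLevelsBy g σ p ∧ ∀ x, sign (p x) * ε x = sign σ * ε (σ x)}
  one_mem' := ⟨1, fun _ => 1, actsOnTwoLevelsBy_one, fun _ => by simp⟩
  mul_mem' := by
    rintro g h ⟨σ, p, hg, hσ⟩ ⟨τ, r, hh, hτ⟩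
    refine ⟨σ * τ, _, hg.mul hh, fun x => ?_⟩
    calc sign (p (τ x) * r x) * ε x = sign (p (τ x)) * (sign (r x) * ε x) := by
          rw [map_mul, mul_assoc]
      _ = sign τ * (sign (p (τ x)) * ε (τ x)) := by rw [hτ]; ac_rfl
      _ = sign (σ * τ) * ε ((σ * τ) x) := by rw [hσ, map_mul, Perm.mul_apply]; ac_rfl
  inv_mem' := by
    rintro g ⟨σ, p, hg, hσ⟩
    refine ⟨σ⁻¹, _, hg.inv, fun x => ?_⟩
    have hy := hσ (σ⁻¹ x)
    rw [Perm.apply_inv_self] at hy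
    calc sign (p (σ⁻¹ x))⁻¹ * ε x = sign (p (σ⁻¹ x)) * ε (σ⁻¹ x) * (ε (σ⁻¹ x) * ε x) := by
          rw [sign_inv, mul_assoc, ← mul_assoc (ε _), Int.units_mul_self, one_mul]
      _ = sign σ⁻¹ * ε (σ⁻¹ x) := by
          rw [hy, sign_inv, mul_assoc, mul_left_comm (ε x), Int.units_mul_self, mul_one]

end SignTwist

def dualTwist : Fin 4 → ℤˣ := fun x => if x = 3 then -1 else 1

/-- `dActE false` and `dActE true` are `𝕆 = (𝕆,𝕆,𝟙,𝟙)(a c d)` and `𝟙 = (𝟙,𝟙,𝕆,𝕆)(a b c d)`;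
these are their root permutations, and the section of `dActE b` at `x` is `dActE (out4 x b)`. -/
def dualRootPerm : Bool → Perm (Fin 4)
  | false => swap 0 3 * swap 0 2
  | true => finRotate 4

theorem dActE_mem_signTwistSubgroup (b : Bool) : dActE b ∈ signTwistSubgroup dualTwist := by
  refine ⟨dualRootPerm b, fun x => dualRootPerm (out4 x b), ⟨fun q => ?_, fun x q => ?_⟩, ?_⟩
  · change dAct b [q] = _
    revert q; cases b <;> decide
  · change dAct b [x, q] = _
    revert x q; cases b <;> decide
  · cases b <;> decide

theorem Gamma_le_signTwistSubgroup : Gamma ≤ signTwistSubgroup dualTwist := by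
  rw [Gamma, Subgroup.closure_le, Set.insert_subset_iff, Set.singleton_subset_iff]
  exact ⟨dActE_mem_signTwistSubgroup false, dActE_mem_signTwistSubgroup true⟩

/-- every element g of Γ stabilizing the first level of the 4-ary
tree pointwise has all its first-level sections g|_x acting on the first level
by even permutations of {a,b,c,d}. -/
theorem first_level_sections_even :
    ∀ g ∈ Gamma, (∀ q : Fin 4, g [q] = [q]) →
      ∀ x : Fin 4, ∃ p : Equiv.Perm (Fin 4),
        Equiv.Perm.sign p = 1 ∧ ∀ q : Fin 4, g [x, q] = [x, p q] := by
  intro g hg hfix x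
  obtain ⟨σ, p, hacts, hsign⟩ := Gamma_le_signTwistSubgroup hg
  have hσ : σ = 1 := Equiv.ext fun q => List.singleton_injective ((hacts.1 q).symm.trans (hfix q))
  subst hσ
  exact ⟨p x, by simpa using hsign x, fun q => hacts.2 x q⟩
end

section
/- Let v ∈ Γ (the dual group of B₄, generated by α = (α,α,β,β)(a b)(c d), β = (β,β,α,α)(c d), and (b c)‾) be written as a word v₁v₂⋯v_k in these generators, and suppose v fixes the letter d. Then the parity of the permutation induced by v on the first level of the 4-ary tree equals the parity of the permutation induced by the section v|_d on the first level. -/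
/-- The generating set {α, β, (b c)‾} of Γ. -/
noncomputable def gens : Fin 3 → Equiv.Perm (List (Fin 4)) :=
  ![alphaE, betaE, mapPerm (Equiv.swap 1 2)]

/-!
Record a word in the generators by its action on the first two levels: a permutation `σ` of the
letters together with a section permutation at every letter. Let `ε` be `-1` on the letter `d`
and `1` elsewhere. For each generator, the sign of `σ` times the sign of its section at `y` is
`ε y * ε (σ y)`: the parity changes exactly when `d` is entered or left. This identity telescopes
along any word, and when the word fixes `d` the right-hand side at `d` is `ε d * ε d = 1`.
-/

open Equiv

section TwoLevels

variable {ι X : Type*} (σ : ι → Perm X) (s : ι → X → Perm X)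

def wordSection : List ι → X → Perm X
  | [], _ => 1
  | i :: l, x => s i ((l.map σ).prod x) * wordSection l x

variable {σ s}

theorem prod_map_apply_singleton (g : ι → Perm (List X)) (hg : ∀ i x, g i [x] = [σ i x])
    (l : List ι) (x : X) : (l.map g).prod [x] = [(l.map σ).prod x] := by
  induction l with
  | nil => rfl
  | cons i l ih => simp only [List.map_cons, List.prod_cons, Perm.mul_apply, ih, hg]

theorem prod_map_apply_pair (g : ι → Perm (List X)) (hg : ∀ i x q, g i [x, q] = [σ i x, s i x q])
    (l : List ι) (x q : X) :
    (l.map g).prod [x, q] = [(l.map σ).prod x, wordSection σ s l x q] := by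
  induction l with
  | nil => rfl
  | cons i l ih => simp only [List.map_cons, List.prod_cons, Perm.mul_apply, ih, hg, wordSection]

variable [Fintype X] [DecidableEq X]

theorem sign_prod_mul_sign_wordSection (ε : X → ℤˣ)
    (h : ∀ i y, Perm.sign (σ i) * Perm.sign (s i y) = ε y * ε (σ i y)) (l : List ι) (x : X) :
    Perm.sign (l.map σ).prod * Perm.sign (wordSection σ s l x) = ε x * ε ((l.map σ).prod x) := by
  induction l with
  | nil => simp [wordSection, Int.units_mul_self]
  | cons i l ih =>
    set y := (l.map σ).prod x
    calc Perm.sign ((i :: l).map σ).prod * Perm.sign (wordSection σ s (i :: l) x)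
        = (Perm.sign (σ i) * Perm.sign (s i y)) *
            (Perm.sign (l.map σ).prod * Perm.sign (wordSection σ s l x)) := by
          simp only [List.map_cons, List.prod_cons, wordSection, map_mul, y]
          exact mul_mul_mul_comm _ _ _ _
      _ = ε x * ε (σ i y) * (ε y * ε y) := by rw [h, ih]; ac_rfl
      _ = ε x * ε (((i :: l).map σ).prod x) := by
          rw [Int.units_mul_self, mul_one]; rfl

theorem sign_prod_eq_sign_wordSection_of_apply_eq (ε : X → ℤˣ)
    (h : ∀ i y, Perm.sign (σ i) * Perm.sign (s i y) = ε y * ε (σ i y)) {l : List ι} {x : X}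
    (hx : (l.map σ).prod x = x) : Perm.sign (l.map σ).prod = Perm.sign (wordSection σ s l x) := by
  have key := sign_prod_mul_sign_wordSection ε h l x
  rw [hx, Int.units_mul_self, mul_eq_one_iff_eq_inv] at key
  rw [key, Int.units_inv_eq_self]

end TwoLevels

-- With a, b, c, d = 0, 1, 2, 3: α = (α,α,β,β)(a b)(c d), β = (β,β,α,α)(c d), and (b c)‾ is
-- its own section everywhere.
def genPerm : Fin 3 → Perm (Fin 4) :=
  ![swap 0 1 * swap 2 3, swap 2 3, swap 1 2]

def genSection : Fin 3 → Fin 4 → Perm (Fin 4) :=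
  ![fun x => if x.val ≤ 1 then genPerm 0 else genPerm 1,
    fun x => if x.val ≤ 1 then genPerm 1 else genPerm 0,
    fun _ => genPerm 2]

theorem gens_apply_singleton : ∀ (i : Fin 3) (x : Fin 4), gens i [x] = [genPerm i x] := by decide

theorem gens_apply_pair :
    ∀ (i : Fin 3) (x q : Fin 4), gens i [x, q] = [genPerm i x, genSection i x q] := by
  decide

def signAtD (x : Fin 4) : ℤˣ := if x = 3 then -1 else 1

theorem sign_genPerm_mul_sign_genSection :
    ∀ (i : Fin 3) (y : Fin 4),
      Perm.sign (genPerm i) * Perm.sign (genSection i y) = signAtD y * signAtD (genPerm i y) := by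
  decide

/-- if v ∈ Γ is written as a word in the generators α, β, (b c)‾
and v fixes the letter d, then the permutation induced by v on the first level
and the permutation induced by the section v|_d on the first level have the
same parity. -/
theorem parity_of_section_at_d (l : List (Fin 3)) :
    ∀ _hfix : (l.map gens).prod [(3 : Fin 4)] = [3],
    ∀ p p' : Equiv.Perm (Fin 4),
      (∀ q : Fin 4, (l.map gens).prod [q] = [p q]) →
      (∀ q : Fin 4, (l.map gens).prod [(3 : Fin 4), q] = [(3 : Fin 4), p' q]) →
      Equiv.Perm.sign p = Equiv.Perm.sign p' := by
  intro hfix p p' hp hp'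
  have level1 := prod_map_apply_singleton gens gens_apply_singleton l
  have level2 := prod_map_apply_pair gens gens_apply_pair l
  have hd : (l.map genPerm).prod 3 = 3 := by simpa [level1] using hfix
  have hp_eq : p = (l.map genPerm).prod := Equiv.ext fun q => by simpa [level1] using (hp q).symm
  have hp'_eq : p' = wordSection genPerm genSection l 3 :=
    Equiv.ext fun q => by
      have hq := hp' q
      simp only [level2, List.cons.injEq, and_true] at hq
      exact hq.2.symm
  rw [hp_eq, hp'_eq]
  exact sign_prod_eq_sign_wordSection_of_apply_eq signAtD sign_genPerm_mul_sign_genSection hd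
end

section
/- For each n ≥ 2, the element (ab)^{n-1}c (a word of length 2n-1 over {a,b,c,d}) and the element (ab)^{n-1}ac (length 2n) are nontrivial automorphisms of the binary rooted tree, where a,b,c,d are the generators of the group generated by B₄. -/
/-- The action of a word in the generators a,b,c,d (applied left to right). -/
def wordAct (l : List (Fin 4)) (w : List Bool) : List Bool :=
  l.foldl (fun w q => act q w) w

/-
The generators a and b fix the first letter of every word, while c flips it. Hence every word in
a and b fixes the one-letter word 0, and any such word followed by c sends it to 1.
-/

lemma wordAct_cons (q : Fin 4) (l : List (Fin 4)) (w : List Bool) :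
    wordAct (q :: l) w = wordAct l (act q w) := rfl

lemma wordAct_append (l₁ l₂ : List (Fin 4)) (w : List Bool) :
    wordAct (l₁ ++ l₂) w = wordAct l₂ (wordAct l₁ w) := by
  simp only [wordAct, List.foldl_append]

lemma act_singleton (q : Fin 4) (x : Bool) : act q [x] = [out4 q x] := rfl

lemma wordAct_singleton_of_forall_le_one {l : List (Fin 4)} (hl : ∀ q ∈ l, q.val ≤ 1)
    (x : Bool) : wordAct l [x] = [x] := by
  induction l with
  | nil => rfl
  | cons q l ih =>
    have hq : out4 q x = x := by simp [out4, hl q List.mem_cons_self]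
    rw [wordAct_cons, act_singleton, hq]
    exact ih fun p hp => hl p (List.mem_cons_of_mem q hp)

lemma wordAct_append_c_ne_of_forall_le_one {l : List (Fin 4)} (hl : ∀ q ∈ l, q.val ≤ 1) :
    wordAct (l ++ [2]) [false] ≠ [false] := by
  rw [wordAct_append, wordAct_singleton_of_forall_le_one hl]
  decide

/-- for every n ≥ 2 the elements (ab)^{n-1}c and (ab)^{n-1}ac of
the group generated by B₄ are nontrivial automorphisms of the binary tree. -/
theorem ab_words_nontrivial :
    ∀ n : ℕ, 2 ≤ n →
      (∃ w : List Bool,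
        wordAct ((List.replicate (n - 1) ([0, 1] : List (Fin 4))).flatten ++ [2]) w ≠ w) ∧
      (∃ w : List Bool,
        wordAct ((List.replicate (n - 1) ([0, 1] : List (Fin 4))).flatten ++ [0, 2]) w ≠ w) := by
  intro n _
  have hab : ∀ q ∈ (List.replicate (n - 1) ([0, 1] : List (Fin 4))).flatten, q.val ≤ 1 := by
    simp only [List.mem_flatten, List.mem_replicate]
    rintro q ⟨_, ⟨_, rfl⟩, hq⟩
    fin_cases hq <;> decide
  have haba : ∀ q ∈ (List.replicate (n - 1) ([0, 1] : List (Fin 4))).flatten ++ [0], q.val ≤ 1 := by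
    simp only [List.mem_append, List.mem_singleton]
    rintro q (hq | rfl)
    exacts [hab q hq, by decide]
  refine ⟨⟨[false], wordAct_append_c_ne_of_forall_le_one hab⟩, ⟨[false], ?_⟩⟩
  have h := wordAct_append_c_ne_of_forall_le_one haba
  rwa [List.append_assoc] at h
end
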